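/- arXiv:1501.07260 — 5 statements merged into one kernel-verified Lean document; each statement's English description precedes it below -/
import Mathlib

section
/- Fix an integer n ≥ 1 and a constant M ≥ 0. For each integer L ≥ 1 let f_L : (Fin n → Fin L) → ℂ and, for each j ∈ Fin n, let g_{L,j} : Fin L → ℂ, with |f_L(ℓ)| ≤ M for every tuple ℓ and |g_{L,j}(m)| ≤ M for every m. Assume the cluster decomposition property: for every ε > 0 there exist ξ ∈ ℕ and L₀ ∈ ℕ such that for all L ≥ L₀ and all tuples ℓ : Fin n → Fin L whose entries are pairwise farther apart than ξ (i.e. |(ℓ i : ℤ) − (ℓ j : ℤ)| > ξ for all i ≠ j), one has |f_L(ℓ) − ∏_{j} g_{L,j}(ℓ j)| ≤ ε. Then lim_{L→∞} ( L^{−n} · ∑_{ℓ : Fin n → Fin L} f_L(ℓ) − ∏_{j ∈ Fin n} ( L^{−1} · ∑_{m ∈ Fin L} g_{L,j}(m) ) ) = 0. -/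
/-!
Expanding the product of averages turns it into the average over all tuples `ℓ` of
`∏ j, g (ℓ j)`, so the difference is the average of `f ℓ - ∏ j, g (ℓ j)`. This is at most `ε`
on tuples whose entries are pairwise more than `ξ` apart and at most `M + M ^ n` everywhere,
while the tuples with two entries within `ξ` of each other number at most `n² (2ξ + 1) Lⁿ⁻¹`,
a fraction `O(ξ / L)` of all `Lⁿ` tuples.
-/

open Filter Finset

section Counting

variable {ι : Type*} [Fintype ι] [DecidableEq ι]

lemma card_filter_abs_sub_le_mul_le (L ξ : ℕ) {i j : ι} (hij : i ≠ j) :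
    #{ℓ : ι → Fin L | |(ℓ i : ℤ) - ℓ j| ≤ ξ} * L ≤ (2 * ξ + 1) * L ^ Fintype.card ι := by
  -- Off `j` the tuple is free; `ℓ j` is then pinned to within `ξ` of `ℓ i`.
  have hinj : #{ℓ : ι → Fin L | |(ℓ i : ℤ) - ℓ j| ≤ ξ}
      ≤ #((univ : Finset ({k // k ≠ j} → Fin L)) ×ˢ Icc (-(ξ : ℤ)) ξ) := by
    refine card_le_card_of_injOn (fun ℓ => (fun k => ℓ k, (ℓ j : ℤ) - ℓ i)) ?_ ?_
    · intro ℓ hℓ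
      simp only [coe_filter, mem_univ, true_and, Set.mem_ofPred_eq] at hℓ
      rw [abs_sub_comm, abs_le] at hℓ
      simpa using hℓ
    · intro ℓ _ ℓ' _ h
      simp only [Prod.mk.injEq] at h
      have hoff : ∀ k, k ≠ j → ℓ k = ℓ' k := fun k hk => congrFun h.1 ⟨k, hk⟩
      have hj : ℓ j = ℓ' j := Fin.ext <| by have := h.2; rw [hoff i hij] at this; omega
      funext k
      by_cases hk : k = j
      · exact hk ▸ hj
      · exact hoff k hk
  have hsplit : L * L ^ Fintype.card {k // k ≠ j} = L ^ Fintype.card ι := by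
    simpa using (Fintype.card_congr (Equiv.piSplitAt j fun _ => Fin L)).symm
  have hIcc : #(Icc (-(ξ : ℤ)) ξ) = 2 * ξ + 1 := by
    rw [Int.card_Icc]; omega
  calc #{ℓ : ι → Fin L | |(ℓ i : ℤ) - ℓ j| ≤ ξ} * L
      ≤ L ^ Fintype.card {k // k ≠ j} * (2 * ξ + 1) * L := by
        simpa [card_product, hIcc] using Nat.mul_le_mul_right L hinj
    _ = (2 * ξ + 1) * L ^ Fintype.card ι := by rw [← hsplit]; ring

open scoped Classical in
lemma card_filter_not_pairwise_mul_le (L ξ : ℕ) :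
    #{ℓ : ι → Fin L | ¬ Pairwise fun i j => (ξ : ℤ) < |(ℓ i : ℤ) - ℓ j|} * L
      ≤ Fintype.card ι ^ 2 * ((2 * ξ + 1) * L ^ Fintype.card ι) := by
  have hsub : ({ℓ : ι → Fin L | ¬ Pairwise fun i j => (ξ : ℤ) < |(ℓ i : ℤ) - ℓ j|} :
      Finset (ι → Fin L)) ⊆ (univ : Finset ι).offDiag.biUnion fun p =>
        ({ℓ : ι → Fin L | |(ℓ p.1 : ℤ) - ℓ p.2| ≤ ξ} : Finset _) := by
    intro ℓ hℓ
    simp only [mem_filter, mem_univ, true_and, Pairwise, not_forall, not_lt, exists_prop] at hℓ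
    obtain ⟨i, j, hij, hclose⟩ := hℓ
    simpa using ⟨i, j, hij, hclose⟩
  calc _ ≤ (∑ p ∈ (univ : Finset ι).offDiag, #{ℓ : ι → Fin L | |(ℓ p.1 : ℤ) - ℓ p.2| ≤ ξ}) * L :=
        Nat.mul_le_mul_right L ((card_le_card hsub).trans card_biUnion_le)
    _ = ∑ p ∈ (univ : Finset ι).offDiag, #{ℓ : ι → Fin L | |(ℓ p.1 : ℤ) - ℓ p.2| ≤ ξ} * L :=
        sum_mul _ _ _
    _ ≤ ∑ _p ∈ (univ : Finset ι).offDiag, (2 * ξ + 1) * L ^ Fintype.card ι :=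
        sum_le_sum fun p hp => card_filter_abs_sub_le_mul_le L ξ (mem_offDiag.mp hp).2.2
    _ ≤ Fintype.card ι ^ 2 * ((2 * ξ + 1) * L ^ Fintype.card ι) := by
        rw [sum_const, smul_eq_mul, offDiag_card, card_univ, sq]
        exact Nat.mul_le_mul_right _ (Nat.sub_le _ _)

end Counting

lemma norm_sum_le_of_norm_le_compl {α E : Type*} [Fintype α] [DecidableEq α]
    [SeminormedAddCommGroup E] (s : Finset α) {u : α → E} {ε C : ℝ} (hε : 0 ≤ ε)
    (hcompl : ∀ a ∉ s, ‖u a‖ ≤ ε) (hs : ∀ a ∈ s, ‖u a‖ ≤ C) :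
    ‖∑ a, u a‖ ≤ Fintype.card α * ε + #s * C := by
  have hcard : (#sᶜ : ℝ) ≤ Fintype.card α := by exact_mod_cast card_le_univ sᶜ
  calc ‖∑ a, u a‖ ≤ ∑ a, ‖u a‖ := norm_sum_le _ _
    _ = ∑ a ∈ s, ‖u a‖ + ∑ a ∈ sᶜ, ‖u a‖ := (sum_add_sum_compl s _).symm
    _ ≤ #s * C + #sᶜ * ε := by
        gcongr
        · simpa using sum_le_card_nsmul s _ C hs
        · simpa using sum_le_card_nsmul sᶜ _ ε fun a ha => hcompl a (mem_compl.mp ha)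
    _ ≤ Fintype.card α * ε + #s * C := by nlinarith

lemma norm_sum_div_le_of_pairwise_far {ι E : Type*} [Fintype ι] [DecidableEq ι]
    [SeminormedAddCommGroup E] {L ξ : ℕ} (hL : 0 < L) {u : (ι → Fin L) → E} {ε C : ℝ}
    (hε : 0 ≤ ε) (hC : 0 ≤ C) (hbound : ∀ ℓ, ‖u ℓ‖ ≤ C)
    (hfar : ∀ ℓ : ι → Fin L, (Pairwise fun i j => (ξ : ℤ) < |(ℓ i : ℤ) - ℓ j|) → ‖u ℓ‖ ≤ ε) :
    ‖∑ ℓ, u ℓ‖ / (L : ℝ) ^ Fintype.card ι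
      ≤ ε + C * (Fintype.card ι ^ 2 * (2 * ξ + 1)) / L := by
  classical
  set bad := ({ℓ : ι → Fin L | ¬ Pairwise fun i j => (ξ : ℤ) < |(ℓ i : ℤ) - ℓ j|} :
    Finset (ι → Fin L))
  have hLpos : (0 : ℝ) < L := by exact_mod_cast hL
  have hsum := norm_sum_le_of_norm_le_compl bad hε
    (fun ℓ hℓ => hfar ℓ (by simpa [bad] using hℓ)) (fun ℓ _ => hbound ℓ)
  have hbad : (#bad : ℝ) * L ≤ Fintype.card ι ^ 2 * ((2 * ξ + 1) * L ^ Fintype.card ι) := by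
    have hbad' : #bad * L ≤ Fintype.card ι ^ 2 * ((2 * ξ + 1) * L ^ Fintype.card ι) :=
      card_filter_not_pairwise_mul_le L ξ
    exact_mod_cast hbad'
  rw [Fintype.card_fun, Fintype.card_fin, Nat.cast_pow] at hsum
  have hLk : (0 : ℝ) < (L : ℝ) ^ Fintype.card ι := by positivity
  calc ‖∑ ℓ, u ℓ‖ / (L : ℝ) ^ Fintype.card ι
      ≤ ((L : ℝ) ^ Fintype.card ι * ε + #bad * C) / (L : ℝ) ^ Fintype.card ι := by gcongr
    _ = ε + #bad * C / (L : ℝ) ^ Fintype.card ι := by field_simp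
    _ ≤ ε + C * (Fintype.card ι ^ 2 * (2 * ξ + 1)) / L := by
        gcongr ε + ?_
        rw [div_le_div_iff₀ hLk hLpos]
        nlinarith

lemma prod_mul_sum_eq_pow_mul_sum_pi {ι κ R : Type*} [Fintype ι] [DecidableEq ι] [Fintype κ]
    [CommSemiring R] (c : R) (g : ι → κ → R) :
    ∏ j, (c * ∑ m, g j m) = c ^ Fintype.card ι * ∑ ℓ : ι → κ, ∏ j, g j (ℓ j) := by
  rw [prod_mul_distrib, prod_const, card_univ, Fintype.prod_sum]

theorem cluster_factorisation_general
    (n : ℕ) (M : ℝ) (hM : 0 ≤ M)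
    (f : (L : ℕ) → (Fin n → Fin L) → ℂ)
    (g : (L : ℕ) → Fin n → Fin L → ℂ)
    (hf : ∀ (L : ℕ), 1 ≤ L → ∀ ℓ : Fin n → Fin L, ‖f L ℓ‖ ≤ M)
    (hg : ∀ (L : ℕ), 1 ≤ L → ∀ (j : Fin n) (m : Fin L), ‖g L j m‖ ≤ M)
    (hcluster : ∀ ε : ℝ, 0 < ε → ∃ (ξ : ℕ) (L₀ : ℕ), ∀ L : ℕ, L₀ ≤ L →
      ∀ ℓ : Fin n → Fin L,
        (∀ i j : Fin n, i ≠ j → (ξ : ℤ) < |(ℓ i : ℤ) - (ℓ j : ℤ)|) →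
        ‖f L ℓ - ∏ j : Fin n, g L j (ℓ j)‖ ≤ ε) :
    Tendsto (fun L : ℕ =>
        (1 / (L : ℂ) ^ n) * ∑ ℓ : Fin n → Fin L, f L ℓ
          - ∏ j : Fin n, ((1 / (L : ℂ)) * ∑ m : Fin L, g L j m))
      atTop (nhds 0) := by
  rw [NormedAddGroup.tendsto_nhds_zero]
  intro ε hε
  obtain ⟨ξ, L₀, hξ⟩ := hcluster (ε / 2) (half_pos hε)
  have hrare : ∀ᶠ L : ℕ in atTop, (M + M ^ n) * (n ^ 2 * (2 * ξ + 1)) / L < ε / 2 :=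
    (tendsto_const_div_atTop_nhds_zero_nat _).eventually (gt_mem_nhds (half_pos hε))
  filter_upwards [hrare, eventually_ge_atTop L₀, eventually_ge_atTop 1] with L hL hL₀ hL1
  have hbound : ∀ ℓ : Fin n → Fin L, ‖f L ℓ - ∏ j, g L j (ℓ j)‖ ≤ M + M ^ n := fun ℓ =>
    calc ‖f L ℓ - ∏ j, g L j (ℓ j)‖ ≤ ‖f L ℓ‖ + ∏ j, ‖g L j (ℓ j)‖ :=
          (norm_sub_le _ _).trans (add_le_add_right (Finset.norm_prod_le _ _) _)
      _ ≤ M + M ^ n := by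
          gcongr
          · exact hf L hL1 ℓ
          · simpa using prod_le_prod (s := univ) (fun _ _ => norm_nonneg _)
              fun j _ => hg L hL1 j (ℓ j)
  rw [prod_mul_sum_eq_pow_mul_sum_pi, Fintype.card_fin, one_div_pow, ← mul_sub,
    ← sum_sub_distrib, norm_mul, norm_div, norm_one, norm_pow, Complex.norm_natCast,
    one_div_mul_eq_div]
  calc _ ≤ ε / 2 + (M + M ^ n) * (n ^ 2 * (2 * ξ + 1)) / L := by
        simpa using norm_sum_div_le_of_pairwise_far hL1 (half_pos hε).le (by positivity) hbound
          (hξ L hL₀)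
    _ < ε := by linarith

/-- Cluster decomposition implies factorisation of the expectation value per unit length
of a product of extensive operators (Lemma 1 of the paper, correlation-function form). -/
theorem cluster_factorisation
    (n : ℕ) (hn : 1 ≤ n) (M : ℝ) (hM : 0 ≤ M)
    (f : (L : ℕ) → (Fin n → Fin L) → ℂ)
    (g : (L : ℕ) → Fin n → Fin L → ℂ)
    (hf : ∀ (L : ℕ), 1 ≤ L → ∀ ℓ : Fin n → Fin L, ‖f L ℓ‖ ≤ M)
    (hg : ∀ (L : ℕ), 1 ≤ L → ∀ (j : Fin n) (m : Fin L), ‖g L j m‖ ≤ M)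
    (hcluster : ∀ ε : ℝ, 0 < ε → ∃ (ξ : ℕ) (L₀ : ℕ), ∀ L : ℕ, L₀ ≤ L →
      ∀ ℓ : Fin n → Fin L,
        (∀ i j : Fin n, i ≠ j → (ξ : ℤ) < |(ℓ i : ℤ) - (ℓ j : ℤ)|) →
        ‖f L ℓ - ∏ j : Fin n, g L j (ℓ j)‖ ≤ ε) :
    Tendsto (fun L : ℕ =>
        (1 / (L : ℂ) ^ n) * ∑ ℓ : Fin n → Fin L, f L ℓ
          - ∏ j : Fin n, ((1 / (L : ℂ)) * ∑ m : Fin L, g L j m))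
      atTop (nhds 0) :=
  cluster_factorisation_general n M hM f g hf hg hcluster
end

section
/- Let γ, k ∈ ℝ, write c = cos(k/2), s = sin(k/2), and assume ε² := c² + γ² s² > 0. Let σ^x, σ^y, σ^z be the Pauli matrices, E(a) the diagonal 2×2 matrix diag(e^{ia}, e^{−ia}) (so E(a) = e^{i a σ^z}), and define the 4×4 complex matrix 𝓗 = −(σ^x · E(k/2)) ⊗ (σ^y · (c·1 + iγ s·σ^z)) (Kronecker product). Then: (i) 𝓗² = ε² • 1₄; and (ii) for every 4×4 complex matrix O, lim_{T→∞} (1/T) ∫₀^T exp(i t 𝓗) · O · exp(−i t 𝓗) dt = (1/2) O + (1/(2ε²)) 𝓗 O 𝓗. -/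
/-! Since `𝓗² = ε²`, `J = 𝓗 / ε` is an involution, so `e^{zJ} = cosh z + sinh z • J`. Conjugation by
`e^{itεJ}` therefore leaves the part `(O + JOJ) / 2` of `O` that commutes with `J` fixed and
multiplies the two off-diagonal parts by `e^{± 2iεt}`, whose time averages tend to zero. -/

open Filter Matrix Complex
open scoped Matrix Kronecker

attribute [local instance] Matrix.normedAddCommGroup Matrix.normedSpace

noncomputable def σx : Matrix (Fin 2) (Fin 2) ℂ := !![0, 1; 1, 0]
noncomputable def σy : Matrix (Fin 2) (Fin 2) ℂ := !![0, -Complex.I; Complex.I, 0]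
noncomputable def σz : Matrix (Fin 2) (Fin 2) ℂ := !![1, 0; 0, -1]

/-- `Emat a = e^{i a σ^z} = diag(e^{ia}, e^{-ia})`. -/
noncomputable def Emat (a : ℝ) : Matrix (Fin 2) (Fin 2) ℂ :=
  !![Complex.exp (Complex.I * (a : ℂ)), 0; 0, Complex.exp (-(Complex.I * (a : ℂ)))]

open scoped Topology

section Involution

variable {𝔸 : Type*} [Ring 𝔸] [Algebra ℂ 𝔸]

theorem exists_smul_eq_and_mul_self_eq_one {w : ℂ} (hw : w ≠ 0) {H : 𝔸}
    (hH : H * H = w ^ 2 • 1) : ∃ J : 𝔸, H = w • J ∧ J * J = 1 := by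
  refine ⟨w⁻¹ • H, by rw [smul_smul, mul_inv_cancel₀ hw, one_smul], ?_⟩
  rw [smul_mul_smul_comm, hH, smul_smul, ← sq, inv_pow, inv_mul_cancel₀ (pow_ne_zero 2 hw),
    one_smul]

variable [TopologicalSpace 𝔸] [IsTopologicalRing 𝔸] [ContinuousSMul ℂ 𝔸] [T2Space 𝔸] {J : 𝔸}

theorem NormedSpace.exp_smul_of_mul_self_eq_one (hJ : J * J = 1) (z : ℂ) :
    NormedSpace.exp (z • J) = cosh z • 1 + sinh z • J := by
  have hpow : ∀ n : ℕ, J ^ (2 * n) = 1 := fun n => by rw [pow_mul, sq, hJ, one_pow]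
  rw [NormedSpace.exp_eq_tsum ℂ]
  refine HasSum.tsum_eq (HasSum.even_add_odd ?_ ?_)
  · convert (hasSum_cosh z).smul_const (1 : 𝔸) using 2 with n
    rw [smul_pow, hpow, smul_smul, div_eq_inv_mul]
  · convert (hasSum_sinh z).smul_const J using 2 with n
    rw [smul_pow, pow_succ J, hpow, one_mul, smul_smul, div_eq_inv_mul]

/-- `(1 ± J) / 2` are the spectral projections of `J`; the constant term is the part of `O` that is
diagonal with respect to them. -/
theorem NormedSpace.exp_smul_mul_mul_exp_neg_smul_of_mul_self_eq_one (hJ : J * J = 1) (z : ℂ)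
    (O : 𝔸) :
    NormedSpace.exp (z • J) * O * NormedSpace.exp (-z • J) =
      (1 / 2 : ℂ) • (O + J * O * J) + Complex.exp (2 * z) • ((1 / 4 : ℂ) • ((1 + J) * O * (1 - J)))
        + Complex.exp (-(2 * z)) • ((1 / 4 : ℂ) • ((1 - J) * O * (1 + J))) := by
  have hinv : Complex.exp z * Complex.exp (-z) = 1 := by
    rw [← Complex.exp_add, add_neg_cancel, Complex.exp_zero]
  rw [exp_smul_of_mul_self_eq_one hJ, exp_smul_of_mul_self_eq_one hJ, cosh_neg, sinh_neg,
    Complex.cosh, Complex.sinh, two_mul, Complex.exp_add, neg_add, Complex.exp_add]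
  simp only [add_mul, mul_add, sub_mul, mul_sub, smul_mul_assoc, mul_smul_comm, one_mul, mul_one,
    smul_add, smul_sub, smul_smul, neg_smul, mul_neg]
  match_scalars <;> first | ring1 | linear_combination hinv / 2

end Involution

section TimeAverage

variable {E : Type*} [NormedAddCommGroup E] [NormedSpace ℂ E]

noncomputable def timeAverage (f : ℝ → E) (T : ℝ) : E := (1 / T) • ∫ t in (0 : ℝ)..T, f t

theorem timeAverage_add {f g : ℝ → E} (hf : Continuous f) (hg : Continuous g) :
    timeAverage (f + g) = timeAverage f + timeAverage g := by
  ext T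
  simp only [timeAverage, Pi.add_apply, ← smul_add]
  rw [intervalIntegral.integral_add (hf.intervalIntegrable 0 T) (hg.intervalIntegrable 0 T)]

variable [CompleteSpace E]

theorem timeAverage_const_eventuallyEq (A : E) : timeAverage (fun _ => A) =ᶠ[atTop] fun _ => A := by
  filter_upwards [eventually_ne_atTop 0] with T hT
  rw [timeAverage, intervalIntegral.integral_const, sub_zero, smul_smul, one_div_mul_cancel hT,
    one_smul]

theorem norm_integral_exp_mul_le {c : ℂ} (hc : c ≠ 0) (hre : c.re ≤ 0) {T : ℝ} (hT : 0 ≤ T) :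
    ‖∫ t in (0 : ℝ)..T, exp (c * t)‖ ≤ 2 / ‖c‖ := by
  rw [integral_exp_mul_complex hc, norm_div, ofReal_zero, mul_zero, exp_zero]
  gcongr
  calc ‖exp (c * T) - 1‖ ≤ ‖exp (c * T)‖ + ‖(1 : ℂ)‖ := norm_sub_le _ _
    _ ≤ 1 + 1 := by
      gcongr
      · rw [norm_exp, Real.exp_le_one_iff, re_mul_ofReal]
        exact mul_nonpos_of_nonpos_of_nonneg hre hT
      · simp
    _ = 2 := one_add_one_eq_two

theorem tendsto_timeAverage_exp_mul_smul {c : ℂ} (hc : c ≠ 0) (hre : c.re ≤ 0) (B : E) :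
    Tendsto (timeAverage fun t => exp (c * t) • B) atTop (𝓝 0) := by
  have hscalar : Tendsto (fun T : ℝ => (1 / T) • ∫ t in (0 : ℝ)..T, exp (c * t)) atTop (𝓝 0) := by
    refine squeeze_zero_norm' ?_ ((tendsto_const_nhds (x := 2 / ‖c‖)).div_atTop tendsto_id)
    filter_upwards [eventually_gt_atTop 0] with T hT
    rw [norm_smul, Real.norm_of_nonneg (by positivity), one_div_mul_eq_div, id]
    gcongr
    exact norm_integral_exp_mul_le hc hre hT.le
  have hsplit : timeAverage (fun t => exp (c * t) • B) =
      fun T => ((1 / T) • ∫ t in (0 : ℝ)..T, exp (c * t)) • B := by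
    ext T
    rw [timeAverage, intervalIntegral.integral_smul_const, smul_assoc]
  simpa only [hsplit, zero_smul] using hscalar.smul_const B

theorem tendsto_timeAverage_add_exp_smul_add_exp_neg_smul {c : ℂ} (hc : c ≠ 0) (hre : c.re = 0)
    (A B C : E) :
    Tendsto (timeAverage fun t => A + exp (c * t) • B + exp (-c * t) • C) atTop (𝓝 A) := by
  have hcont : ∀ (d : ℂ) (X : E), Continuous fun t : ℝ => exp (d * t) • X := fun d X => by
    fun_prop
  have hsplit : (fun t : ℝ => A + exp (c * t) • B + exp (-c * t) • C) =
      (fun _ => A) + (fun t : ℝ => exp (c * t) • B) + fun t : ℝ => exp (-c * t) • C := rfl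
  rw [hsplit, timeAverage_add (continuous_const.add (hcont c B)) (hcont (-c) C),
    timeAverage_add continuous_const (hcont c B)]
  have h := ((tendsto_const_nhds.congr' (timeAverage_const_eventuallyEq A).symm).add
    (tendsto_timeAverage_exp_mul_smul hc hre.le B)).add
    (tendsto_timeAverage_exp_mul_smul (neg_ne_zero.2 hc) (by simp [hre]) C)
  rwa [add_zero, add_zero] at h

end TimeAverage

theorem σx_mul_Emat_mul_self (a : ℝ) : σx * Emat a * (σx * Emat a) = 1 := by
  ext i j
  fin_cases i <;> fin_cases j <;>
    simp [σx, Emat, Matrix.mul_apply, Fin.sum_univ_two, ← Complex.exp_add]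

theorem σy_mul_smul_one_add_smul_σz_mul_self (c d : ℂ) :
    σy * (c • 1 + d • σz) * (σy * (c • 1 + d • σz)) = (c ^ 2 - d ^ 2) • 1 := by
  simp only [σy, σz, one_fin_two, smul_of, of_add_of, mul_fin_two, smul_cons, smul_empty,
    cons_add_cons, empty_add_empty]
  ext i j
  fin_cases i <;> fin_cases j <;> simp <;> ring_nf <;> simp <;> ring

theorem neg_σx_mul_Emat_kronecker_σy_mul_self (a : ℝ) (c d : ℂ) :
    -((σx * Emat a) ⊗ₖ (σy * (c • 1 + d • σz))) * -((σx * Emat a) ⊗ₖ (σy * (c • 1 + d • σz))) =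
      (c ^ 2 - d ^ 2) • 1 := by
  rw [neg_mul_neg, ← mul_kronecker_mul, σx_mul_Emat_mul_self,
    σy_mul_smul_one_add_smul_σz_mul_self, kronecker_smul, one_kronecker_one]

/-- The two-site symbol `𝓗 = -(σ^x E(k/2)) ⊗ (σ^y (c·1 + iγs·σ^z))` of the XY chain squares to
`ε² • 1` and the time average of `e^{it𝓗} O e^{-it𝓗}` equals `O/2 + 𝓗O𝓗/(2ε²)`. -/
theorem xy_symbol_time_average (γ k : ℝ)
    (hε : 0 < Real.cos (k / 2) ^ 2 + γ ^ 2 * Real.sin (k / 2) ^ 2) :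
    let c : ℂ := (Real.cos (k / 2) : ℂ)
    let s : ℂ := (Real.sin (k / 2) : ℂ)
    let ε2 : ℝ := Real.cos (k / 2) ^ 2 + γ ^ 2 * Real.sin (k / 2) ^ 2
    let H : Matrix (Fin 2 × Fin 2) (Fin 2 × Fin 2) ℂ :=
      -((σx * Emat (k / 2)) ⊗ₖ (σy * (c • (1 : Matrix (Fin 2) (Fin 2) ℂ)
        + (Complex.I * (γ : ℂ) * s) • σz)))
    (H * H = (ε2 : ℂ) • (1 : Matrix (Fin 2 × Fin 2) (Fin 2 × Fin 2) ℂ)) ∧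
    ∀ O : Matrix (Fin 2 × Fin 2) (Fin 2 × Fin 2) ℂ,
      Tendsto (fun T : ℝ => (1 / T) •
          ∫ t in (0 : ℝ)..T,
            NormedSpace.exp ((Complex.I * (t : ℂ)) • H) * O *
              NormedSpace.exp ((-(Complex.I * (t : ℂ))) • H))
        atTop
        (nhds ((1 / 2 : ℂ) • O + (1 / (2 * (ε2 : ℂ))) • (H * O * H))) := by
  intro c s ε2 H
  have hHH : H * H = (ε2 : ℂ) • 1 := by
    rw [neg_σx_mul_Emat_kronecker_σy_mul_self]
    congr 1
    simp only [c, s, ε2, ofReal_add, ofReal_mul, ofReal_pow]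
    linear_combination (-(γ : ℂ) ^ 2 * Real.sin (k / 2) ^ 2) * I_sq
  refine ⟨hHH, fun O => ?_⟩
  have hε2 : (0 : ℝ) < ε2 := hε
  set ε : ℝ := √ε2
  have hε0 : (ε : ℂ) ≠ 0 := ofReal_ne_zero.2 (Real.sqrt_pos.2 hε2).ne'
  have hεsq : (ε : ℂ) ^ 2 = ε2 := by rw [← ofReal_pow, Real.sq_sqrt hε2.le]
  obtain ⟨J, hHJ, hJ⟩ := exists_smul_eq_and_mul_self_eq_one hε0 (hεsq ▸ hHH)
  have hconj : ∀ t : ℝ, NormedSpace.exp ((I * t) • H) * O * NormedSpace.exp ((-(I * t)) • H) =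
      (1 / 2 : ℂ) • (O + J * O * J)
        + exp (2 * ε * I * t) • ((1 / 4 : ℂ) • ((1 + J) * O * (1 - J)))
        + exp (-(2 * ε * I) * t) • ((1 / 4 : ℂ) • ((1 - J) * O * (1 + J))) := by
    intro t
    rw [hHJ, smul_smul, smul_smul, neg_mul,
      NormedSpace.exp_smul_mul_mul_exp_neg_smul_of_mul_self_eq_one hJ,
      show 2 * (I * t * ε) = 2 * ε * I * t by ring, neg_mul]
  have htarget : (1 / 2 : ℂ) • O + (1 / (2 * (ε2 : ℂ))) • (H * O * H) =
      (1 / 2 : ℂ) • (O + J * O * J) := by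
    rw [hHJ, smul_mul_assoc, mul_smul_comm, smul_mul_assoc, smul_smul, smul_smul, ← hεsq,
      smul_add]
    congr 2
    field_simp
  show Tendsto (timeAverage _) atTop _
  rw [funext hconj, htarget]
  exact tendsto_timeAverage_add_exp_smul_add_exp_neg_smul (by simp [hε0]) (by simp) _ _ _
end

section
/- Let γ, k ∈ ℝ and write c = cos(k/2), s = sin(k/2). Let σ^x, σ^y, σ^z be the Pauli matrices, E(a) = diag(e^{ia}, e^{−ia}), and define B = σ^y·(c·1 + iγ s·σ^z) and C = σ^x·(c·1 + iγ s·σ^z). Define the 4×4 complex matrices (Kronecker products): 𝒬₁ = (σ^x E(k/2)) ⊗ B, 𝒬₂ = c · (1₂ ⊗ B), 𝒬₃ = sin(k) • 1₄, 𝒬₄ = s · ((σ^x E(k/2)) ⊗ 1₂), 𝒬₅ = (σ^y E(k/2)) ⊗ C, 𝒬₆ = c · ((σ^y E(k/2)) ⊗ σ^z), 𝒬₇ = sin(k) · (σ^z ⊗ σ^z), 𝒬₈ = s · (σ^z ⊗ C). Then 𝒬₁ commutes with every 𝒬_j for j = 1,…,8, i.e. 𝒬₁𝒬_j = 𝒬_j𝒬₁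 for all j. -/
open Matrix Complex
open scoped Matrix Kronecker

/-- The two-site symbols `𝒬₁,…,𝒬₈` of the (quasi-)local conservation laws of the XY model. -/
noncomputable def Qmat (γ k : ℝ) : Fin 8 → Matrix (Fin 2 × Fin 2) (Fin 2 × Fin 2) ℂ :=
  let c : ℂ := (Real.cos (k / 2) : ℂ)
  let s : ℂ := (Real.sin (k / 2) : ℂ)
  let B : Matrix (Fin 2) (Fin 2) ℂ :=
    σy * (c • (1 : Matrix (Fin 2) (Fin 2) ℂ) + (Complex.I * (γ : ℂ) * s) • σz)
  let C : Matrix (Fin 2) (Fin 2) ℂ :=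
    σx * (c • (1 : Matrix (Fin 2) (Fin 2) ℂ) + (Complex.I * (γ : ℂ) * s) • σz)
  ![ (σx * Emat (k / 2)) ⊗ₖ B,
     c • ((1 : Matrix (Fin 2) (Fin 2) ℂ) ⊗ₖ B),
     ((Real.sin k : ℂ)) • (1 : Matrix (Fin 2 × Fin 2) (Fin 2 × Fin 2) ℂ),
     s • ((σx * Emat (k / 2)) ⊗ₖ (1 : Matrix (Fin 2) (Fin 2) ℂ)),
     (σy * Emat (k / 2)) ⊗ₖ C,
     c • ((σy * Emat (k / 2)) ⊗ₖ σz),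
     ((Real.sin k : ℂ)) • (σz ⊗ₖ σz),
     s • (σz ⊗ₖ C) ]

/-!
Each `𝒬_j` is a scalar multiple of a Kronecker product `A ⊗ B`, and such a product commutes with
`𝒬₁ = (σˣE) ⊗ (σʸM)` as soon as both of its factors commute, or both anticommute, with the
corresponding factors of `𝒬₁`. All the anticommutations come from `σˣ` and `σʸ = i σˣσᶻ`
anticommuting with `σᶻ`, while `E = E(k/2)` and `M = c + iγs σᶻ` commute with `σᶻ`.
-/

section Kronecker

variable {R l m : Type*} [CommRing R] [Fintype l] [Fintype m]
  {A A' : Matrix l l R} {B B' : Matrix m m R}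

theorem Matrix.kronecker_commute (hA : Commute A A') (hB : Commute B B') :
    Commute (A ⊗ₖ B) (A' ⊗ₖ B') := by
  rw [Commute, SemiconjBy, ← mul_kronecker_mul, ← mul_kronecker_mul, hA.eq, hB.eq]

theorem Matrix.kronecker_commute_of_anticommute (hA : A * A' = -(A' * A))
    (hB : B * B' = -(B' * B)) : Commute (A ⊗ₖ B) (A' ⊗ₖ B') := by
  rw [Commute, SemiconjBy, ← mul_kronecker_mul, ← mul_kronecker_mul, hA, hB]
  ext
  simp

end Kronecker

section Anticommute

variable {R : Type*} [Ring R] {a d z : R}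

theorem mul_mul_anticomm_of_commute (ha : a * z = -(z * a)) (hd : Commute d z) :
    a * d * z = -(z * (a * d)) := by
  rw [mul_assoc, hd.eq, ← mul_assoc, ha, neg_mul, mul_assoc]

theorem mul_anticomm_mul_mul_of_commute (ha : a * z = -(z * a)) (hd : Commute d z) :
    a * d * (a * d * z) = -(a * d * z * (a * d)) := by
  have hza : z * a = -(a * z) := by rw [ha, neg_neg]
  calc a * d * (a * d * z) = a * d * a * (d * z) := by simp only [mul_assoc]
    _ = -(a * d * (z * a) * d) := by rw [hza, hd.eq]; noncomm_ring
    _ = -(a * d * z * (a * d)) := by simp only [mul_assoc]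

end Anticommute

theorem σx_mul_σz : σx * σz = -(σz * σx) := by
  ext i j; fin_cases i <;> fin_cases j <;> simp [σx, σz]

theorem σy_mul_σz : σy * σz = -(σz * σy) := by
  ext i j; fin_cases i <;> fin_cases j <;> simp [σy, σz]

theorem σy_eq_I_smul_σx_mul_σz : σy = I • (σx * σz) := by
  ext i j; fin_cases i <;> fin_cases j <;> simp [σx, σy, σz]

theorem commute_Emat_σz (a : ℝ) : Commute (Emat a) σz := by
  ext i j; fin_cases i <;> fin_cases j <;> simp [Emat, σz]

theorem commute_smul_one_add_smul_σz_σz (c w : ℂ) : Commute (c • 1 + w • σz) σz :=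
  ((Commute.one_left σz).smul_left c).add_left ((Commute.refl σz).smul_left w)

theorem σx_mul_anticomm_σy_mul {D : Matrix (Fin 2) (Fin 2) ℂ} (hD : Commute D σz) :
    σx * D * (σy * D) = -(σy * D * (σx * D)) := by
  have hσy : σy * D = I • (σx * D * σz) := by
    rw [σy_eq_I_smul_σx_mul_σz, smul_mul_assoc, mul_assoc, ← hD.eq, mul_assoc]
  rw [hσy, smul_mul_assoc, mul_smul_comm, mul_anticomm_mul_mul_of_commute σx_mul_σz hD, smul_neg]

/-- `𝒬₁` commutes with every `𝒬_j`, `j = 1,…,8`. -/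
theorem Q1_commutes (γ k : ℝ) (j : Fin 8) :
    Qmat γ k 0 * Qmat γ k j = Qmat γ k j * Qmat γ k 0 := by
  have hE := commute_Emat_σz (k / 2)
  have hM := commute_smul_one_add_smul_σz_σz (Real.cos (k / 2)) (I * γ * Real.sin (k / 2))
  have hEE := σx_mul_anticomm_σy_mul hE
  have hMM := (neg_eq_iff_eq_neg.mpr (σx_mul_anticomm_σy_mul hM)).symm
  have hEz := mul_mul_anticomm_of_commute σx_mul_σz hE
  have hMz := mul_mul_anticomm_of_commute σy_mul_σz hM
  fin_cases j
  · rfl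
  · exact (kronecker_commute (Commute.one_right _) (Commute.refl _)).smul_right _
  · exact (Commute.one_right _).smul_right _
  · exact (kronecker_commute (Commute.refl _) (Commute.one_right _)).smul_right _
  · exact kronecker_commute_of_anticommute hEE hMM
  · exact (kronecker_commute_of_anticommute hEE hMz).smul_right _
  · exact (kronecker_commute_of_anticommute hEz hMz).smul_right _
  · exact (kronecker_commute_of_anticommute hEz hMM).smul_right _
end

section
/- Let g̃, λ ∈ ℝ and let m : ℝ → ℝ be a continuous function with |m(k)| ≤ 1 for all k. Then there exists h ∈ ℝ, with |h − g̃| ≤ 2|λ|, satisfying the self-consistency equation h = g̃ + 2λ · (1/2π) ∫_{−π}^{π} m(k) · (h − cos k)/√(1 + h² − 2h cos k) dk. -/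
/-!
The right-hand side `F h` of the self-consistency equation always lies within `2|λ|` of `g̃`,
because the integrand is bounded by `1` (note `1 + h² - 2h cos k = (h - cos k)² + sin² k`).
`F` is continuous by dominated convergence: for `sin k ≠ 0`, i.e. for almost every `k`, the
denominator never vanishes. A continuous self-map of `ℝ` with values in `[g̃ - 2|λ|, g̃ + 2|λ|]`
has a fixed point there by the intermediate value theorem.
-/

open Real MeasureTheory Set

theorem exists_abs_sub_le_isFixedPt {F : ℝ → ℝ} (hF : Continuous F) {c r : ℝ}
    (hFr : ∀ x, |F x - c| ≤ r) : ∃ x, |x - c| ≤ r ∧ Function.IsFixedPt F x := by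
  have hr : 0 ≤ r := (abs_nonneg _).trans (hFr c)
  have hmaps : MapsTo F (Icc (c - r) (c + r)) (Icc (c - r) (c + r)) := fun x _ ↦
    mem_Icc_iff_abs_le.mp (by rw [abs_sub_comm]; exact hFr x)
  obtain ⟨x, hx, hFx⟩ :=
    exists_mem_Icc_isFixedPt_of_mapsTo hF.continuousOn (by linarith) hmaps
  exact ⟨x, abs_sub_comm c x ▸ mem_Icc_iff_abs_le.mpr hx, hFx⟩

noncomputable def meanFieldIntegrand (m : ℝ → ℝ) (h k : ℝ) : ℝ :=
  m k * (h - cos k) / √(1 + h ^ 2 - 2 * h * cos k)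

theorem one_add_sq_sub_two_mul_mul_cos (h k : ℝ) :
    1 + h ^ 2 - 2 * h * cos k = (h - cos k) ^ 2 + sin k ^ 2 := by
  linear_combination (sin_sq_add_cos_sq k).symm

theorem abs_meanFieldIntegrand_le_one {m : ℝ → ℝ} (hm1 : ∀ k, |m k| ≤ 1) (h k : ℝ) :
    |meanFieldIntegrand m h k| ≤ 1 := by
  have hnum : |h - cos k| ≤ √(1 + h ^ 2 - 2 * h * cos k) :=
    abs_le_sqrt (by rw [one_add_sq_sub_two_mul_mul_cos]; exact le_add_of_nonneg_right (sq_nonneg _))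
  rw [meanFieldIntegrand, abs_div, abs_mul, abs_of_nonneg (sqrt_nonneg _)]
  exact div_le_one_of_le₀ ((mul_le_of_le_one_left (abs_nonneg _) (hm1 k)).trans hnum)
    (sqrt_nonneg _)

theorem continuous_meanFieldIntegrand_of_sin_ne_zero (m : ℝ → ℝ) {k : ℝ} (hk : sin k ≠ 0) :
    Continuous fun h ↦ meanFieldIntegrand m h k := by
  have hpos : ∀ h : ℝ, 0 < 1 + h ^ 2 - 2 * h * cos k := fun h ↦ by
    rw [one_add_sq_sub_two_mul_mul_cos]; positivity
  exact Continuous.div (by fun_prop) (by fun_prop) fun h ↦ (sqrt_pos.mpr (hpos h)).ne'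

theorem ae_sin_ne_zero : ∀ᵐ k : ℝ, sin k ≠ 0 := by
  have hnull : volume {k : ℝ | sin k = 0} = 0 :=
    measure_mono_null (fun k hk ↦ sin_eq_zero_iff.mp hk)
      ((countable_range fun n : ℤ ↦ (n : ℝ) * π).measure_zero _)
  simpa [ae_iff] using hnull

theorem continuous_integral_meanFieldIntegrand {m : ℝ → ℝ} (hm : Measurable m)
    (hm1 : ∀ k, |m k| ≤ 1) (a b : ℝ) :
    Continuous fun h ↦ ∫ k in a..b, meanFieldIntegrand m h k := by
  refine intervalIntegral.continuous_of_dominated_interval (bound := fun _ ↦ 1)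
    (fun h ↦ ?_) (fun h ↦ .of_forall fun k _ ↦ abs_meanFieldIntegrand_le_one hm1 h k)
    intervalIntegrable_const ?_
  · exact (Measurable.div (hm.mul (by fun_prop)) (by fun_prop)).aestronglyMeasurable
  · filter_upwards [ae_sin_ne_zero] with k hk _
    exact continuous_meanFieldIntegrand_of_sin_ne_zero m hk

theorem abs_integral_meanFieldIntegrand_le {m : ℝ → ℝ} (hm1 : ∀ k, |m k| ≤ 1) (h : ℝ) :
    |∫ k in (-π)..π, meanFieldIntegrand m h k| ≤ 2 * π := by
  have := intervalIntegral.norm_integral_le_of_norm_le_const (a := -π) (b := π)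
    fun k _ ↦ (norm_eq_abs _).trans_le (abs_meanFieldIntegrand_le_one hm1 h k)
  rwa [norm_eq_abs, one_mul, sub_neg_eq_add, ← two_mul, abs_of_pos two_pi_pos] at this

/-- Existence of a solution `h` of the self-consistency equation
`h = g̃ + 2λ (1/2π) ∫_{-π}^{π} m(k) (h - cos k)/√(1 + h² - 2h cos k) dk`,
with `|h - g̃| ≤ 2|λ|`, for any continuous `m` with `|m| ≤ 1`. -/
theorem selfconsistency_solution (lam gt : ℝ) (m : ℝ → ℝ)
    (hm : Continuous m) (hm1 : ∀ k : ℝ, |m k| ≤ 1) :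
    ∃ h : ℝ, |h - gt| ≤ 2 * |lam| ∧
      h = gt + 2 * lam * ((1 / (2 * Real.pi)) *
        ∫ k in (-Real.pi)..Real.pi,
          m k * (h - Real.cos k) / Real.sqrt (1 + h ^ 2 - 2 * h * Real.cos k)) := by
  set F : ℝ → ℝ := fun h ↦
    gt + 2 * lam * ((1 / (2 * π)) * ∫ k in (-π)..π, meanFieldIntegrand m h k)
  have hF : Continuous F := by
    have := continuous_integral_meanFieldIntegrand hm.measurable hm1 (-π) π
    fun_prop
  have hFbound : ∀ h, |F h - gt| ≤ 2 * |lam| := fun h ↦ by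
    have hmean : |(1 / (2 * π)) * ∫ k in (-π)..π, meanFieldIntegrand m h k| ≤ 1 := by
      rw [abs_mul, abs_of_pos (by positivity), one_div_mul_eq_div]
      exact div_le_one_of_le₀ (abs_integral_meanFieldIntegrand_le hm1 h) (by positivity)
    calc |F h - gt| = 2 * |lam| * |(1 / (2 * π)) * ∫ k in (-π)..π, meanFieldIntegrand m h k| := by
          simp only [F, add_sub_cancel_left, abs_mul, abs_two]
      _ ≤ 2 * |lam| := mul_le_of_le_one_right (by positivity) hmean
  obtain ⟨h, hh, hFh⟩ := exists_abs_sub_le_isFixedPt hF hFbound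
  exact ⟨h, hh, hFh.symm⟩
end

section
/- Let h, k, m ∈ ℝ with 1 + h² − 2h·cos k > 0, set r = √(1 + h² − 2h·cos k), and define the 2×2 complex matrix Γ = −(m/r) • ((h − cos k)·σ^y + (sin k)·σ^x). Then: (i) Tr[Γ·σ^y] = −2m(h − cos k)/r; (ii) Tr[Γ·σ^y·E(k)] = −2m(h·cos k − 1)/r, where E(k) = diag(e^{ik}, e^{−ik}) = e^{ikσ^z}; and consequently (iii) (h − cos k)·Tr[Γ·σ^y·E(k)] = (h·cos k − 1)·Tr[Γ·σ^y]. -/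
open Matrix

/-! Since `σʸσʸ = 1` and `σˣσʸ = i σᶻ`, right multiplication by `σʸ` turns `a σʸ + b σˣ` into
`a + i b σᶻ`; tracing against `e^{ikσᶻ}` then gives `2 (a cos k - b sin k)`, and with
`a = h - cos k`, `b = sin k` this is `2 (h cos k - 1)`. -/

lemma σy_mul_σy : σy * σy = 1 := by
  simp [σy, one_fin_two]

lemma σx_mul_σy : σx * σy = !![Complex.I, 0; 0, -Complex.I] := by
  simp [σx, σy]

lemma trace_smul_σy_add_smul_σx_mul_σy_mul (a b : ℂ) (M : Matrix (Fin 2) (Fin 2) ℂ) :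
    trace ((a • σy + b • σx) * σy * M) = a * trace M + b * trace (σx * σy * M) := by
  rw [add_mul, add_mul, smul_mul, smul_mul, smul_mul, σy_mul_σy, one_mul, trace_add,
    trace_smul, smul_mul, trace_smul, smul_eq_mul, smul_eq_mul]

lemma trace_σx_mul_σy : trace (σx * σy) = 0 := by
  simp [σx_mul_σy, trace_fin_two]

lemma trace_Emat (a : ℝ) : trace (Emat a) = 2 * Real.cos a := by
  rw [Emat, trace_fin_two_of, Complex.ofReal_cos, Complex.two_cos, neg_mul, mul_comm]

lemma trace_σx_mul_σy_mul_Emat (a : ℝ) : trace (σx * σy * Emat a) = -2 * Real.sin a := by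
  simp only [σx_mul_σy, Emat, mul_fin_two, trace_fin_two_of, Complex.ofReal_sin,
    mul_comm Complex.I (a : ℂ), ← neg_mul]
  linear_combination Complex.two_sin (a : ℂ)

theorem stationary_symbol_traces_general (h k m : ℝ) :
    let r : ℝ := Real.sqrt (1 + h ^ 2 - 2 * h * Real.cos k)
    let Γ : Matrix (Fin 2) (Fin 2) ℂ :=
      (-(m / r : ℝ) : ℂ) • (((h - Real.cos k : ℝ) : ℂ) • σy + ((Real.sin k : ℝ) : ℂ) • σx)
    Matrix.trace (Γ * σy) = ((-2 * m * (h - Real.cos k) / r : ℝ) : ℂ) ∧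
    Matrix.trace (Γ * σy * Emat k) = ((-2 * m * (h * Real.cos k - 1) / r : ℝ) : ℂ) ∧
    ((h - Real.cos k : ℝ) : ℂ) * Matrix.trace (Γ * σy * Emat k)
      = ((h * Real.cos k - 1 : ℝ) : ℂ) * Matrix.trace (Γ * σy) := by
  intro r Γ
  have trace_Γ_mul_σy_mul (M : Matrix (Fin 2) (Fin 2) ℂ) :
      trace (Γ * σy * M) = (-(m / r : ℝ) : ℂ) * (((h - Real.cos k : ℝ) : ℂ) * trace M
        + ((Real.sin k : ℝ) : ℂ) * trace (σx * σy * M)) := by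
    rw [smul_mul, smul_mul, trace_smul, smul_eq_mul, trace_smul_σy_add_smul_σx_mul_σy_mul]
  have h1 : trace (Γ * σy) = ((-2 * m * (h - Real.cos k) / r : ℝ) : ℂ) := by
    rw [← mul_one (Γ * σy), trace_Γ_mul_σy_mul, mul_one, trace_one, trace_σx_mul_σy,
      Fintype.card_fin]
    push_cast
    ring
  have h2 : trace (Γ * σy * Emat k) = ((-2 * m * (h * Real.cos k - 1) / r : ℝ) : ℂ) := by
    rw [trace_Γ_mul_σy_mul, trace_Emat, trace_σx_mul_σy_mul_Emat]
    push_cast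
    linear_combination (2 * m / (r : ℂ)) * Complex.sin_sq_add_cos_sq (k : ℂ)
  refine ⟨h1, h2, ?_⟩
  rw [h1, h2]
  push_cast
  ring

/-- Trace identities for the symbol `Γ_m(k)` of the stationary states of the nonlocal Ising
Hamiltonian; (iii) is the stationarity condition of the self-consistent mean-field equations. -/
theorem stationary_symbol_traces (h k m : ℝ)
    (hpos : 0 < 1 + h ^ 2 - 2 * h * Real.cos k) :
    let r : ℝ := Real.sqrt (1 + h ^ 2 - 2 * h * Real.cos k)
    let Γ : Matrix (Fin 2) (Fin 2) ℂ :=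
      (-(m / r : ℝ) : ℂ) • (((h - Real.cos k : ℝ) : ℂ) • σy + ((Real.sin k : ℝ) : ℂ) • σx)
    Matrix.trace (Γ * σy) = ((-2 * m * (h - Real.cos k) / r : ℝ) : ℂ) ∧
    Matrix.trace (Γ * σy * Emat k) = ((-2 * m * (h * Real.cos k - 1) / r : ℝ) : ℂ) ∧
    ((h - Real.cos k : ℝ) : ℂ) * Matrix.trace (Γ * σy * Emat k)
      = ((h * Real.cos k - 1 : ℝ) : ℂ) * Matrix.trace (Γ * σy) :=
  stationary_symbol_traces_general h k m
end
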